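/- Suppose nonnegative reals R12, R21, R13, R31, R23, R32 and n ≥ 0 satisfy all of: R12+R13+max(R23,R32) ≤ n, R21+R23+max(R13,R31) ≤ n, R31+R32+max(R12,R21) ≤ n, and R12+R23+R31 = n+λ with λ > 0. Define modified rates R12' = R12−λ, R13' = R13+λ, R32' = R32+λ, with all other rates unchanged. Then the modified forward cycle sum satisfies R12'+R23+R31 ≤ n, and the modified rates remain nonnegative. -/
import Mathlib

theorem stmt_9 (R12 R21 R13 R31 R23 R32 n lam : ℝ)
    (h12 : 0 ≤ R12) (h21 : 0 ≤ R21) (h13 : 0 ≤ R13) (h31 : 0 ≤ R31)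
    (h23 : 0 ≤ R23) (h32 : 0 ≤ R32) (hn : 0 ≤ n)
    (h1 : R12 + R13 + max R23 R32 ≤ n)
    (h2 : R21 + R23 + max R13 R31 ≤ n)
    (h3 : R31 + R32 + max R12 R21 ≤ n)
    (hlam : 0 < lam)
    (hcyc : R12 + R23 + R31 = n + lam) :
    (R12 - lam) + R23 + R31 ≤ n ∧ 0 ≤ R12 - lam ∧ 0 ≤ R13 + lam ∧ 0 ≤ R32 + lam := by
  have := le_max_right R13 R31
  refine ⟨by linarith, by linarith, by linarith, by linarith⟩
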